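/- arXiv:2205.01908 — 5 statements merged into one kernel-verified Lean document; each statement's English description precedes it below -/
import Mathlib

section
/- Let p > 3 be a prime and s ≥ 1 an integer. Define additive submonoids of ℕ recursively by H_0 = ℕ and H_i = the submonoid generated by {p^{2i−1}+2} ∪ {p·h : h ∈ H_{i−1}} for 1 ≤ i ≤ s. Then H_s equals the additive submonoid of ℕ generated by the set {p^s} ∪ {p^{2s−1−t} + 2p^t : 0 ≤ t ≤ s−1}. -/
/-- The recursively glued semigroups `H_0 = ℕ`,
`H_i = ⟨p^{2i−1}+2, pH_{i−1}⟩` for `i ≥ 1`. -/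
def Heven (p : ℕ) : ℕ → AddSubmonoid ℕ
  | 0 => ⊤
  | (i + 1) => AddSubmonoid.closure
      ({p ^ (2 * (i + 1) - 1) + 2} ∪ {n | ∃ h ∈ Heven p i, n = p * h})

lemma mulset_eq (p : ℕ) (M : AddSubmonoid ℕ) :
    {n | ∃ h ∈ M, n = p * h} = ↑(M.map (AddMonoidHom.mulLeft p)) := by
  ext n
  simp [eq_comm]

lemma step_eq (p a : ℕ) (S : Set ℕ) :
    AddSubmonoid.closure ({a} ∪ {n | ∃ h ∈ AddSubmonoid.closure S, n = p * h})
      = AddSubmonoid.closure ({a} ∪ (fun x => p * x) '' S) := by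
  rw [mulset_eq, AddSubmonoid.closure_union, AddSubmonoid.closure_eq,
    AddMonoidHom.map_mclosure, AddSubmonoid.closure_union]
  rfl

lemma top_eq : (⊤ : AddSubmonoid ℕ) = AddSubmonoid.closure {1} := by
  ext n
  simp [AddSubmonoid.mem_closure_singleton]

theorem glued_semigroup_even (p s : ℕ) (hp : p.Prime) (hp2 : 3 < p) (hs : 1 ≤ s) :
    Heven p s
      = AddSubmonoid.closure
          ({p ^ s} ∪ {n | ∃ t < s, n = p ^ (2 * s - 1 - t) + 2 * p ^ t}) := by
  clear hp hp2
  induction s with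
  | zero => omega
  | succ i ih =>
    rcases Nat.eq_zero_or_pos i with hi | hi
    · subst hi
      show AddSubmonoid.closure ({p ^ (2 * 1 - 1) + 2} ∪ {n | ∃ h ∈ (⊤ : AddSubmonoid ℕ), n = p * h}) = _
      rw [top_eq, step_eq]
      congr 1
      ext n
      constructor
      · rintro (rfl | ⟨x, rfl, rfl⟩)
        · exact Or.inr ⟨0, by omega, by simp⟩
        · exact Or.inl (by simp)
      · rintro (rfl | ⟨t, ht, rfl⟩)
        · exact Or.inr ⟨1, rfl, by simp⟩
        · interval_cases t
          exact Or.inl (by norm_num)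
    · have hH : Heven p (i + 1)
          = AddSubmonoid.closure ({p ^ (2 * (i + 1) - 1) + 2}
              ∪ {n | ∃ h ∈ Heven p i, n = p * h}) := rfl
      rw [hH, ih hi, step_eq]
      congr 1
      ext n
      simp only [Set.mem_union, Set.mem_singleton_iff, Set.mem_setOf_eq, Set.mem_image]
      constructor
      · rintro (rfl | ⟨x, (rfl | ⟨t, ht, rfl⟩), rfl⟩)
        · exact Or.inr ⟨0, by omega, by simp⟩
        · exact Or.inl (by rw [← pow_succ'])
        · refine Or.inr ⟨t + 1, by omega, ?_⟩
          have h1 : 2 * (i + 1) - 1 - (t + 1) = (2 * i - 1 - t) + 1 := by omega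
          rw [h1, pow_succ', pow_succ']
          ring
      · rintro (rfl | ⟨t, ht, rfl⟩)
        · refine Or.inr ⟨p ^ i, Or.inl rfl, by rw [← pow_succ']⟩
        · rcases Nat.eq_zero_or_pos t with rfl | ht0
          · exact Or.inl (by simp)
          · obtain ⟨u, rfl⟩ := Nat.exists_eq_add_of_lt ht0
            refine Or.inr ⟨p ^ (2 * i - 1 - u) + 2 * p ^ u, Or.inr ⟨u, by omega, rfl⟩, ?_⟩
            have h1 : 2 * (i + 1) - 1 - (0 + u + 1) = (2 * i - 1 - u) + 1 := by omega
            rw [h1, pow_succ', pow_succ']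
            ring
end

section
/- Let K be a field, p > 3 a prime and s ≥ 1 an integer. Set a_1 = p^s and a_i = p^{s+i−2} + 2p^{s−i+1} for 2 ≤ i ≤ s+1. Let φ : K[t_1, …, t_{s+1}] → K[Y] be the K-algebra homomorphism with φ(t_i) = Y^{a_i}. Then the kernel of φ is generated by the s polynomials t_2^p − t_1^{p+2} and t_{i+1}^p − t_1^{p^{i−2}(p^2−1)} t_i for 2 ≤ i ≤ s. In particular, the image of φ is a complete intersection ring. -/
/-!
The binomials lie in the kernel, and rewriting `t_{i+1}^p` by the other side of its relation
strictly lowers the weight `∑ i • d_i` of an exponent vector `d`, so modulo the ideal they span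
every polynomial becomes one whose monomials have exponent `< p` in `t_2, …, t_{s+1}`.
On such monomials the degree `∑ d_i a_i` is injective: it equals `p^s A + 2 B`, where `B < p^s`
is the base-`p` numeral with digits `d_{s+1}, …, d_2`, so for odd `p` the degree modulo `p^s`
determines `B`, hence the digits, and then `A` determines `d_1`. A reduced polynomial in the
kernel is therefore zero.
-/

open MvPolynomial Finsupp

namespace MvPolynomial

variable {σ R : Type*} [CommRing R]

theorem aeval_X_pow_monomial (w : σ → ℕ) (d : σ →₀ ℕ) (c : R) :
    aeval (fun i => (Polynomial.X : Polynomial R) ^ w i) (monomial d c)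
      = Polynomial.C c * Polynomial.X ^ weight w d := by
  rw [aeval_monomial, weight_apply, Polynomial.algebraMap_eq, Finsupp.prod]
  simp only [← pow_mul, Finset.prod_pow_eq_pow_sum, Finsupp.sum, smul_eq_mul, mul_comm]

theorem coeff_aeval_X_pow (w : σ → ℕ) (f : MvPolynomial σ R) (n : ℕ) :
    (aeval (fun i => (Polynomial.X : Polynomial R) ^ w i) f).coeff n
      = ∑ d ∈ f.support, if weight w d = n then coeff d f else 0 := by
  conv_lhs => rw [f.as_sum]
  simp only [map_sum, aeval_X_pow_monomial, Polynomial.finsetSum_coeff,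
    Polynomial.coeff_C_mul_X_pow]
  refine Finset.sum_congr rfl fun d _ => ?_
  split_ifs <;> simp_all [eq_comm]

theorem eq_zero_of_aeval_X_pow_eq_zero {w : σ → ℕ} {f : MvPolynomial σ R}
    (hw : Set.InjOn (weight w) (f.support : Set (σ →₀ ℕ)))
    (hf : aeval (fun i => (Polynomial.X : Polynomial R) ^ w i) f = 0) : f = 0 := by
  ext m
  by_contra hm
  have hcoeff := congrArg (Polynomial.coeff · (weight w m)) hf
  simp only [coeff_aeval_X_pow, Polynomial.coeff_zero] at hcoeff
  rw [Finset.sum_eq_single_of_mem m (mem_support_iff.mpr hm), if_pos rfl] at hcoeff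
  · exact hm hcoeff
  · intro d hd hdm
    rw [if_neg fun h => hdm (hw hd (mem_support_iff.mpr hm) h)]

section Reduction

variable {ι : Type*} (p : ℕ) (x : ι → σ) (r : ι → σ →₀ ℕ)

theorem exists_reduced_sub_mem {I : Ideal (MvPolynomial σ R)} (u : σ → ℕ)
    (hu : ∀ i, weight u (r i) < p * u (x i)) (hI : ∀ i, X (x i) ^ p - monomial (r i) 1 ∈ I)
    (f : MvPolynomial σ R) :
    ∃ g, f - g ∈ I ∧ ∀ d ∈ g.support, ∀ i, d (x i) < p := by
  induction f using MvPolynomial.induction_on' with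
  | add f₁ f₂ ih₁ ih₂ =>
    obtain ⟨g₁, hg₁, hred₁⟩ := ih₁
    obtain ⟨g₂, hg₂, hred₂⟩ := ih₂
    refine ⟨g₁ + g₂, by simpa only [add_sub_add_comm] using I.add_mem hg₁ hg₂, ?_⟩
    intro d hd
    classical
    rcases Finset.mem_union.mp (support_add hd) with hd | hd
    exacts [hred₁ d hd, hred₂ d hd]
  | monomial d c =>
    induction hn : weight u d using Nat.strong_induction_on generalizing d with
    | _ n ih =>
    by_cases hred : ∀ i, d (x i) < p
    · refine ⟨monomial d c, by simp, fun d' hd' => ?_⟩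
      rwa [Finset.mem_singleton.mp (support_monomial_subset hd')]
    push Not at hred
    obtain ⟨i, hi⟩ := hred
    obtain ⟨e, rfl⟩ : ∃ e, d = e + single (x i) p :=
      ⟨d - single (x i) p, (tsub_add_cancel_of_le (single_le_iff.mpr hi)).symm⟩
    have hlt : weight u (e + r i) < n := by
      rw [← hn, map_add, map_add, weight_single, smul_eq_mul]
      linarith [hu i]
    obtain ⟨g, hg, hred⟩ := ih _ hlt (e + r i) rfl
    refine ⟨g, ?_, hred⟩
    have hstep : monomial (e + single (x i) p) c - monomial (e + r i) c
        = monomial e c * (X (x i) ^ p - monomial (r i) 1) := by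
      rw [mul_sub, X_pow_eq_monomial, monomial_mul, monomial_mul, mul_one]
    have := I.add_mem (I.mul_mem_left (monomial e c) (hI i)) hg
    rwa [← hstep, sub_add_sub_cancel] at this

theorem ker_aeval_X_pow_eq_span (w u : σ → ℕ) (hw : ∀ i, weight w (r i) = p * w (x i))
    (hu : ∀ i, weight u (r i) < p * u (x i))
    (hinj : Set.InjOn (weight w) {d | ∀ i, d (x i) < p}) :
    RingHom.ker (aeval (R := R) fun j => (Polynomial.X : Polynomial R) ^ w j)
      = Ideal.span (Set.range fun i => X (x i) ^ p - monomial (r i) 1) := by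
  set φ := aeval (R := R) fun j => (Polynomial.X : Polynomial R) ^ w j
  have hgen : ∀ i, φ (X (x i) ^ p - monomial (r i) 1) = 0 := fun i => by
    rw [map_sub, map_pow, aeval_X, aeval_X_pow_monomial, hw, map_one, one_mul, ← pow_mul,
      mul_comm, sub_self]
  have hspan :
      Ideal.span (Set.range fun i => X (x i) ^ p - monomial (r i) 1) ≤ RingHom.ker φ :=
    Ideal.span_le.mpr <| Set.range_subset_iff.mpr hgen
  refine le_antisymm (fun f hf => ?_) hspan
  obtain ⟨g, hfg, hred⟩ := exists_reduced_sub_mem p x r u hu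
    (fun i => Ideal.subset_span (Set.mem_range_self i)) f
  suffices g = 0 by rwa [this, sub_zero] at hfg
  refine eq_zero_of_aeval_X_pow_eq_zero (hinj.mono fun d hd => hred d hd) ?_
  simpa [RingHom.mem_ker.mp hf] using RingHom.mem_ker.mp (hspan hfg)

end Reduction

end MvPolynomial

theorem Nat.sum_mul_pow_lt_pow {b n : ℕ} {c : Fin n → ℕ} (hc : ∀ i, c i < b) :
    ∑ i, c i * b ^ (i : ℕ) < b ^ n :=
  (finFunctionFinEquiv fun i => (⟨c i, hc i⟩ : Fin b)).isLt

theorem Nat.eq_of_sum_mul_pow_eq {b n : ℕ} {c c' : Fin n → ℕ} (hc : ∀ i, c i < b)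
    (hc' : ∀ i, c' i < b) (h : ∑ i, c i * b ^ (i : ℕ) = ∑ i, c' i * b ^ (i : ℕ)) :
    c = c' := by
  have := finFunctionFinEquiv.injective (a₁ := fun i => (⟨c i, hc i⟩ : Fin b))
    (a₂ := fun i => ⟨c' i, hc' i⟩) (Fin.ext h)
  funext i
  exact congrArg (fun f => (f i : ℕ)) this

namespace SemigroupPresentation

variable (p s : ℕ)

/-- `generator p s v` is the paper's `a_{v+1}`. -/
def generator (v : Fin (s + 1)) : ℕ :=
  if v.1 = 0 then p ^ s else p ^ (s + v.1 - 1) + 2 * p ^ (s - v.1)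

theorem generator_zero : generator p s 0 = p ^ s := rfl

theorem generator_succ (i : Fin s) :
    generator p s i.succ = p ^ s * p ^ (i : ℕ) + 2 * p ^ (i.rev : ℕ) := by
  rw [generator, Fin.val_succ, if_neg (Nat.succ_ne_zero i), Fin.val_rev, ← Nat.add_assoc,
    Nat.add_sub_cancel, pow_add]

theorem weight_generator (d : Fin (s + 1) →₀ ℕ) :
    weight (generator p s) d = p ^ s * (d 0 + ∑ i : Fin s, d i.succ * p ^ (i : ℕ))
      + 2 * ∑ i : Fin s, d i.rev.succ * p ^ (i : ℕ) := by
  have hrev : ∑ i : Fin s, d i.rev.succ * p ^ (i : ℕ)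
      = ∑ i : Fin s, d i.succ * p ^ (i.rev : ℕ) :=
    Fintype.sum_equiv Fin.revPerm _ _ fun i => by simp
  rw [hrev, weight_eq_sum, Fin.sum_univ_succ]
  simp only [smul_eq_mul, generator_zero, generator_succ, mul_add, Finset.sum_add_distrib,
    Finset.mul_sum]
  ring_nf

theorem injOn_weight_generator (hp : Odd p) :
    Set.InjOn (weight (generator p s)) {d | ∀ i : Fin s, d i.succ < p} := by
  intro d hd d' hd' h
  simp only [weight_generator] at h
  have hnumeral : ∑ i : Fin s, d i.rev.succ * p ^ (i : ℕ)
      = ∑ i : Fin s, d' i.rev.succ * p ^ (i : ℕ) := by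
    refine Nat.ModEq.eq_of_lt_of_lt (Nat.ModEq.cancel_left_of_coprime (c := 2) ?_ ?_)
      (Nat.sum_mul_pow_lt_pow fun _ => hd _) (Nat.sum_mul_pow_lt_pow fun _ => hd' _)
    · exact Nat.Coprime.pow_left s (Nat.coprime_two_right.mpr hp)
    · have := congrArg (· % p ^ s) h
      simpa [Nat.ModEq] using this
  have hsucc : ∀ i : Fin s, d i.succ = d' i.succ := fun i => by
    simpa using congrFun (Nat.eq_of_sum_mul_pow_eq (fun _ => hd _) (fun _ => hd' _) hnumeral) i.rev
  have hzero : d 0 = d' 0 := by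
    simp only [hsucc, add_left_inj] at h
    have := Nat.eq_of_mul_eq_mul_left (pow_pos hp.pos s) h
    omega
  ext v
  induction v using Fin.cases
  exacts [hzero, hsucc _]

noncomputable def relationExponent (i : Fin s) : Fin (s + 1) →₀ ℕ :=
  if (i : ℕ) = 0 then single 0 (p + 2)
  else single 0 (p ^ ((i : ℕ) - 1) * (p ^ 2 - 1)) + single i.castSucc 1

variable {p s}

theorem weight_val_relationExponent (hp : 0 < p) (i : Fin s) :
    weight Fin.val (relationExponent p s i) < p * (i.succ : ℕ) := by
  unfold relationExponent
  split_ifs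
  · simp only [weight_single, Fin.val_zero, smul_zero, Fin.val_succ]
    positivity
  · simp only [map_add, weight_single, Fin.val_zero, Fin.val_castSucc, smul_eq_mul,
      Fin.val_succ]
    nlinarith

theorem weight_generator_relationExponent (hp : 0 < p) (i : Fin s) :
    weight (generator p s) (relationExponent p s i) = p * generator p s i.succ := by
  unfold relationExponent
  split_ifs with hi
  · obtain ⟨t, rfl⟩ : ∃ t, s = t + 1 := ⟨s - 1, by omega⟩
    rw [weight_single, generator_zero, generator_succ, Fin.val_rev, hi, smul_eq_mul]
    simp only [zero_add, Nat.add_sub_cancel]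
    ring
  · obtain ⟨k, hk⟩ : ∃ k, (i : ℕ) = k + 1 := ⟨i - 1, by omega⟩
    obtain ⟨t, rfl⟩ : ∃ t, s = k + t + 2 := ⟨s - k - 2, by omega⟩
    have hcast : i.castSucc = (⟨k, by omega⟩ : Fin (k + t + 2)).succ := Fin.ext (by simp [hk])
    rw [map_add, weight_single, weight_single, hcast, generator_zero, generator_succ,
      generator_succ, Fin.val_rev, Fin.val_rev, hk, Nat.add_sub_cancel,
      show k + t + 2 - (k + 1) = t + 1 by omega, show k + t + 2 - (k + 1 + 1) = t by omega,
      smul_eq_mul, smul_eq_mul]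
    zify [Nat.one_le_pow 2 p hp]
    ring

variable {R : Type*} [CommRing R]

theorem monomial_relationExponent_of_eq_zero {i : Fin s} (hi : (i : ℕ) = 0) :
    (monomial (relationExponent p s i) 1 : MvPolynomial (Fin (s + 1)) R) = X 0 ^ (p + 2) := by
  rw [relationExponent, if_pos hi, X_pow_eq_monomial]

theorem monomial_relationExponent_of_ne_zero {i : Fin s} (hi : (i : ℕ) ≠ 0) :
    (monomial (relationExponent p s i) 1 : MvPolynomial (Fin (s + 1)) R)
      = X 0 ^ (p ^ ((i : ℕ) - 1) * (p ^ 2 - 1)) * X i.castSucc := by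
  rw [relationExponent, if_neg hi, ← pow_one (X i.castSucc), X_pow_eq_monomial,
    X_pow_eq_monomial, monomial_mul, one_mul]

theorem range_binomial_eq (hs : 1 ≤ s) :
    Set.range (fun i => X i.succ ^ p - monomial (relationExponent p s i) 1)
      = {x : MvPolynomial (Fin (s + 1)) R |
            x = X ⟨1, by omega⟩ ^ p - X ⟨0, by omega⟩ ^ (p + 2) ∨
            ∃ i, ∃ _ : 2 ≤ i, ∃ _ : i ≤ s,
              x = X ⟨i, by omega⟩ ^ p
                - X ⟨0, by omega⟩ ^ (p ^ (i - 2) * (p ^ 2 - 1)) * X ⟨i - 1, by omega⟩} := by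
  ext x
  constructor
  · rintro ⟨i, rfl⟩
    by_cases hi : (i : ℕ) = 0
    · left
      dsimp only
      rw [monomial_relationExponent_of_eq_zero hi, Fin.zero_eta]
      congr
      exact Fin.ext (by simp [hi])
    · right
      refine ⟨i + 1, by omega, i.isLt, ?_⟩
      dsimp only
      rw [monomial_relationExponent_of_ne_zero hi, Fin.zero_eta]
      congr 3
  · rintro (rfl | ⟨i, hi2, his, rfl⟩)
    · refine ⟨⟨0, hs⟩, ?_⟩
      dsimp only
      rw [monomial_relationExponent_of_eq_zero (i := ⟨0, hs⟩) rfl, Fin.zero_eta]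
      rfl
    · refine ⟨⟨i - 1, by omega⟩, ?_⟩
      dsimp only
      rw [monomial_relationExponent_of_ne_zero (by dsimp only; omega), Fin.zero_eta]
      congr 3
      exact Fin.ext (by simp only [Fin.val_succ]; omega)

end SemigroupPresentation

/-- for `a_1 = p^s`, `a_i = p^{s+i−2} + 2p^{s−i+1}` for `2 ≤ i ≤ s+1`, the
kernel of `φ : K[t_1,…,t_{s+1}] → K[Y]`, `t_i ↦ Y^{a_i}`, is generated by
`t_2^p − t_1^{p+2}` and `t_{i+1}^p − t_1^{p^{i−2}(p^2−1)} t_i` for `2 ≤ i ≤ s`.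
(The variable `X ⟨j⟩ : MvPolynomial (Fin (s+1)) K` stands for `t_{j+1}`.) -/
theorem semigroup_presentation_even (K : Type*) [Field K] (p s : ℕ)
    (hp : p.Prime) (hp2 : 3 < p) (hs : 1 ≤ s) :
    RingHom.ker (aeval (R := K) (fun v : Fin (s + 1) =>
        (Polynomial.X : Polynomial K) ^
          (if v.1 = 0 then p ^ s
           else p ^ (s + v.1 - 1) + 2 * p ^ (s - v.1)))).toRingHom
      = Ideal.span
          {x : MvPolynomial (Fin (s + 1)) K |
            x = X ⟨1, by omega⟩ ^ p - X ⟨0, by omega⟩ ^ (p + 2) ∨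
            ∃ i, ∃ _ : 2 ≤ i, ∃ _ : i ≤ s,
              x = X ⟨i, by omega⟩ ^ p
                - X ⟨0, by omega⟩ ^ (p ^ (i - 2) * (p ^ 2 - 1)) * X ⟨i - 1, by omega⟩} := by
  have hodd : Odd p := hp.odd_of_ne_two (by omega)
  rw [← SemigroupPresentation.range_binomial_eq hs]
  open SemigroupPresentation in
  exact ker_aeval_X_pow_eq_span p Fin.succ (relationExponent p s) (generator p s) Fin.val
    (weight_generator_relationExponent hodd.pos) (weight_val_relationExponent hodd.pos)
    (injOn_weight_generator p s hodd)
end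

section
/- Let K be a field, let a_1, …, a_m be positive integers with gcd(a_1, …, a_m) = 1, let b_1, …, b_m be non-negative integers and set b = b_1 a_1 + … + b_m a_m, and let c > 1 be an integer with gcd(b, c) = 1. Let φ : K[t_1, …, t_m] → K[Y] be the K-algebra homomorphism with φ(t_i) = Y^{a_i}, and let φ' : K[t_1, …, t_{m+1}] → K[Y] be the K-algebra homomorphism with φ'(t_i) = Y^{c·a_i} for 1 ≤ i ≤ m and φ'(t_{m+1}) = Y^b. Then the kernel of φ' equals the ideal of K[t_1, …, t_{m+1}] generated by the kernel of φ together with the single element t_{m+1}^c − t_1^{b_1}·…·t_m^{b_m}. -/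
/-!
Write `K[t_1, …, t_{m+1}] = A[T]` with `A = K[t_1, …, t_m]` and `T = t_{m+1}`. Then `φ'` sends
`∑ r_j T^j` to `∑ expand_c (φ r_j) Y^{b j}`, and it kills the monic polynomial
`G = T^c - t_1^{b_1} ⋯ t_m^{b_m}` of degree `c`. Dividing by `G` reduces membership in `ker φ'`
to remainders `R = ∑_{j < c} r_j T^j`. In `φ'(R)` the `j`-th summand only has monomials whose
exponent is `≡ b j (mod c)`, and these residues are pairwise distinct because `b` is a unit
mod `c`; so `φ'(R) = 0` forces every `φ(r_j) = 0`.
-/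

namespace Polynomial

variable {R : Type*} [CommSemiring R]

theorem coeff_expand_mul_X_pow_eq_zero {c : ℕ} (hc : 0 < c) (p : R[X]) {n e : ℕ}
    (he : ¬e ≡ n [MOD c]) : (expand R c p * X ^ n).coeff e = 0 := by
  rw [coeff_mul_X_pow', coeff_expand hc]
  split_ifs with hne hdvd
  · exact absurd ((Nat.modEq_iff_dvd' hne).2 hdvd).symm he
  all_goals rfl

theorem coeff_expand_mul_X_pow_mul_add {c : ℕ} (hc : 0 < c) (p : R[X]) (n k : ℕ) :
    (expand R c p * X ^ n).coeff (c * k + n) = p.coeff k := by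
  rw [coeff_mul_X_pow, coeff_expand_mul' hc]

theorem eq_zero_of_sum_expand_mul_X_pow_eq_zero {b c : ℕ} (hc : 0 < c) (hbc : b.Coprime c)
    {p : ℕ → R[X]} (h : ∑ i ∈ Finset.range c, expand R c (p i) * X ^ (b * i) = 0)
    {j : ℕ} (hj : j < c) : p j = 0 := by
  ext k
  have hcoeff := congrArg (coeff · (c * k + b * j)) h
  simp only [finsetSum_coeff, coeff_zero] at hcoeff
  rwa [Finset.sum_eq_single_of_mem j (Finset.mem_range.2 hj),
    coeff_expand_mul_X_pow_mul_add hc] at hcoeff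
  intro i hi hij
  refine coeff_expand_mul_X_pow_eq_zero hc _ fun hmod => hij ?_
  have hji : j ≡ i [MOD c] := Nat.ModEq.cancel_left_of_coprime hbc.symm <|
    (Nat.mul_add_mod_self_left c k (b * j)).symm.trans hmod
  exact Nat.ModEq.eq_of_lt_of_lt hji.symm (Finset.mem_range.1 hi) hj

theorem map_coeff_eq_zero_of_eval₂_expand_eq_zero {A : Type*} [Semiring A]
    (φ : A →+* R[X]) {b c : ℕ} (hc : 0 < c) (hbc : b.Coprime c) {f : A[X]} (hf : f.degree < c)
    (h : f.eval₂ ((expand R c).toRingHom.comp φ) (X ^ b) = 0) (j : ℕ) : φ (f.coeff j) = 0 := by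
  obtain rfl | hf0 := eq_or_ne f 0
  · rw [coeff_zero, map_zero]
  obtain hj | hj := lt_or_ge j c
  · rw [eval₂_eq_sum_range' _ ((natDegree_lt_iff_degree_lt hf0).2 hf)] at h
    simp_rw [← pow_mul] at h
    exact eq_zero_of_sum_expand_mul_X_pow_eq_zero hc hbc h hj
  · rw [coeff_eq_zero_of_degree_lt (hf.trans_le (by exact_mod_cast hj)), map_zero]

theorem ker_eq_span_C_image_union_singleton {A S : Type*} [CommRing A] [Nontrivial A] [CommRing S]
    (Φ : A[X] →+* S) (I : Ideal A) {G : A[X]} (hG : G.Monic) (hΦG : Φ G = 0)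
    (hI : ∀ x ∈ I, Φ (C x) = 0)
    (hrem : ∀ f : A[X], f.degree < G.degree → Φ f = 0 → ∀ j, f.coeff j ∈ I) :
    RingHom.ker Φ = Ideal.span (C '' I ∪ {G}) := by
  apply le_antisymm
  · intro f hf
    rw [← modByMonic_add_div f G]
    have hmod_mem : f %ₘ G ∈ I.map C := by
      refine Ideal.mem_map_C_iff.2 (hrem _ (degree_modByMonic_lt f hG) ?_)
      rw [modByMonic_eq_sub_mul_div f G, map_sub, map_mul, hΦG, zero_mul, sub_zero]
      exact hf
    refine Ideal.add_mem _ (Ideal.span_mono Set.subset_union_left hmod_mem)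
      (Ideal.mul_mem_right _ _ (Ideal.subset_span (Or.inr rfl)))
  · rw [Ideal.span_le]
    rintro _ (⟨x, hx, rfl⟩ | rfl)
    · exact hI x hx
    · exact hΦG

end Polynomial

theorem RingHom.ker_comp_ringEquiv {R A S : Type*} [Semiring R] [Semiring A] [Semiring S]
    (Φ : A →+* S) (e : R ≃+* A) :
    RingHom.ker (Φ.comp e.toRingHom) = (RingHom.ker Φ).map e.symm := by
  rw [← RingHom.comap_ker, Ideal.map_symm]
  rfl

namespace MvPolynomial

variable (R : Type*) [CommSemiring R] (n : ℕ)

noncomputable def finSuccLastEquiv :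
    MvPolynomial (Fin (n + 1)) R ≃ₐ[R] Polynomial (MvPolynomial (Fin n) R) :=
  (renameEquiv R finSuccEquivLast).trans (optionEquivLeft R (Fin n))

variable {R n}

@[simp]
theorem finSuccLastEquiv_X_last : finSuccLastEquiv R n (X (Fin.last n)) = Polynomial.X := by
  simp [finSuccLastEquiv, finSuccEquivLast_last, optionEquivLeft_X_none]

@[simp]
theorem finSuccLastEquiv_X_castSucc (i : Fin n) :
    finSuccLastEquiv R n (X i.castSucc) = Polynomial.C (X i) := by
  simp [finSuccLastEquiv, finSuccEquivLast_castSucc, optionEquivLeft_X_some]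

@[simp]
theorem finSuccLastEquiv_rename_castSucc (p : MvPolynomial (Fin n) R) :
    finSuccLastEquiv R n (rename Fin.castSucc p) = Polynomial.C p := by
  have : (finSuccLastEquiv R n).toAlgHom.comp (rename Fin.castSucc) = Polynomial.CAlgHom :=
    algHom_ext fun i => by simp
  exact DFunLike.congr_fun this p

end MvPolynomial

open MvPolynomial

theorem watanabe_gluing_general (K : Type*) [Field K] (m : ℕ)
    (a : Fin m → ℕ)
    (bb : Fin m → ℕ) (c : ℕ) (hc : 1 < c)
    (hbc : Nat.gcd (∑ i, bb i * a i) c = 1) :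
    RingHom.ker (aeval (R := K) (fun v : Fin (m + 1) =>
        if h : v.1 < m then (Polynomial.X : Polynomial K) ^ (c * a ⟨v.1, h⟩)
        else Polynomial.X ^ (∑ i, bb i * a i))).toRingHom
      = Ideal.span
          ((MvPolynomial.rename (Fin.castSucc) ''
              (RingHom.ker (aeval (R := K) (fun i : Fin m =>
                (Polynomial.X : Polynomial K) ^ a i)).toRingHom : Set (MvPolynomial (Fin m) K)))
            ∪ {X (Fin.last m) ^ c - ∏ i : Fin m, X i.castSucc ^ bb i}) := by
  set b := ∑ i, bb i * a i
  set φ : MvPolynomial (Fin m) K →ₐ[K] Polynomial K := aeval fun i => Polynomial.X ^ a i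
  set E := finSuccLastEquiv K m
  set Φ := Polynomial.eval₂RingHom ((Polynomial.expand K c).toRingHom.comp φ.toRingHom)
    (Polynomial.X ^ b)
  have hφP : φ (∏ i, X i ^ bb i) = Polynomial.X ^ b := by
    simp [φ, b, ← pow_mul, Finset.prod_pow_eq_pow_sum, mul_comm]
  have hfactor : (aeval fun v : Fin (m + 1) =>
        if h : v.1 < m then (Polynomial.X : Polynomial K) ^ (c * a ⟨v.1, h⟩)
        else Polynomial.X ^ b).toRingHom = Φ.comp E.toRingEquiv.toRingHom := by
    refine ringHom_ext (fun r => by simp [Φ, E, finSuccLastEquiv]) fun v => ?_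
    induction v using Fin.lastCases with
    | last => simp [Φ, E]
    | cast i => simp [Φ, E, φ, ← pow_mul]
  have hker : RingHom.ker Φ = Ideal.span (Polynomial.C '' (RingHom.ker φ.toRingHom) ∪
      {Polynomial.X ^ c - Polynomial.C (∏ i, X i ^ bb i)}) :=
    Polynomial.ker_eq_span_C_image_union_singleton Φ _ (Polynomial.monic_X_pow_sub_C _ (by omega))
      (by simp [Φ, hφP, -map_prod, ← pow_mul, mul_comm]) (fun x hx => by simp_all [Φ])
      (fun f hf hΦf => Polynomial.map_coeff_eq_zero_of_eval₂_expand_eq_zero _ (by omega) hbc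
        (by rwa [Polynomial.degree_X_pow_sub_C (by omega)] at hf) hΦf)
  rw [hfactor, RingHom.ker_comp_ringEquiv, hker,
    Ideal.map_span, Set.image_union, Set.image_image, Set.image_singleton]
  congr 3
  · funext x
    exact E.symm_apply_eq.2 (finSuccLastEquiv_rename_castSucc x).symm
  · exact E.symm_apply_eq.2 (by simp [E])

/-- Watanabe's gluing lemma: if `b = ∑ b_i a_i`, `gcd(a_1,…,a_m) = 1`,
`c > 1` and `gcd(b,c) = 1`, then the kernel of `φ' : K[t_1,…,t_{m+1}] → K[Y]`,
`t_i ↦ Y^{c a_i}` (`i ≤ m`), `t_{m+1} ↦ Y^b`, is generated by the kernel of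
`φ : K[t_1,…,t_m] → K[Y]`, `t_i ↦ Y^{a_i}`, together with `t_{m+1}^c − t_1^{b_1}⋯t_m^{b_m}`.
(`Fin.castSucc` is the inclusion `K[t_1,…,t_m] ↪ K[t_1,…,t_{m+1}]` on variables and
`Fin.last m` is the variable `t_{m+1}`.) -/
theorem watanabe_gluing (K : Type*) [Field K] (m : ℕ) (hm : 1 ≤ m)
    (a : Fin m → ℕ) (ha : ∀ i, 0 < a i) (hgcd : Finset.univ.gcd a = 1)
    (bb : Fin m → ℕ) (c : ℕ) (hc : 1 < c)
    (hbc : Nat.gcd (∑ i, bb i * a i) c = 1) :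
    RingHom.ker (aeval (R := K) (fun v : Fin (m + 1) =>
        if h : v.1 < m then (Polynomial.X : Polynomial K) ^ (c * a ⟨v.1, h⟩)
        else Polynomial.X ^ (∑ i, bb i * a i))).toRingHom
      = Ideal.span
          ((MvPolynomial.rename (Fin.castSucc) ''
              (RingHom.ker (aeval (R := K) (fun i : Fin m =>
                (Polynomial.X : Polynomial K) ^ a i)).toRingHom : Set (MvPolynomial (Fin m) K)))
            ∪ {X (Fin.last m) ^ c - ∏ i : Fin m, X i.castSucc ^ bb i}) :=
  watanabe_gluing_general K m a bb c hc hbc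
end

section
/- Let R be a commutative ring, let n and m be positive integers, and let N be an n×m matrix over R. For a tuple (ℓ_1, …, ℓ_m) of row indices of N, let ν_{ℓ_1, …, ℓ_m} denote the determinant of the m×m matrix whose t-th row is row ℓ_t of N. Then for any tuples (i_1, …, i_{m−1}) and (j_1, …, j_{m+1}) of row indices of N, the following Plücker relation holds: ∑_{a=1}^{m+1} (−1)^a · ν_{i_1, …, i_{m−1}, j_a} · ν_{j_1, …, j_{a−1}, j_{a+1}, …, j_{m+1}} = 0. -/
/-! Put `A = (N_{j_a})_a`, an `(m+2) × (m+1)` matrix, and let `f u = det(N_{i_1}, …, N_{i_m}, u)`,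
which is linear in `u`. The Plücker sum is, up to sign, the Laplace expansion along the first
column of the square matrix `[f ∘ A | A]`. Since `f` is linear, that first column is a linear
combination of the columns of `A`, so the determinant vanishes. -/

open Matrix

namespace Matrix

variable {R : Type*} [CommRing R] {k : ℕ}

theorem sum_neg_one_pow_mul_det_submatrix_succAbove_column (A : Matrix (Fin (k + 1)) (Fin k) R)
    (l : Fin k) :
    ∑ a : Fin (k + 1), (-1 : R) ^ (a : ℕ) * A a l * (A.submatrix a.succAbove id).det = 0 := by
  -- `B = [A_l | A]` has two equal columns; the sum is its expansion along the first one.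
  let B : Matrix (Fin (k + 1)) (Fin (k + 1)) R := of fun a => Fin.cons (A a l) (A a)
  have hB : B.det = 0 := det_zero_of_column_eq (Fin.succ_ne_zero l).symm fun _ => rfl
  rw [det_succ_column_zero] at hB
  exact hB

theorem sum_neg_one_pow_mul_det_submatrix_succAbove_linearMap (A : Matrix (Fin (k + 1)) (Fin k) R)
    (f : (Fin k → R) →ₗ[R] R) :
    ∑ a : Fin (k + 1), (-1 : R) ^ (a : ℕ) * f (A a) * (A.submatrix a.succAbove id).det = 0 := by
  calc ∑ a : Fin (k + 1), (-1 : R) ^ (a : ℕ) * f (A a) * (A.submatrix a.succAbove id).det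
      = ∑ l, f (fun l' => if l = l' then 1 else 0) *
          ∑ a : Fin (k + 1), (-1 : R) ^ (a : ℕ) * A a l * (A.submatrix a.succAbove id).det := by
        simp_rw [fun a => LinearMap.pi_apply_eq_sum_univ f (A a), smul_eq_mul, Finset.mul_sum,
          Finset.sum_mul]
        rw [Finset.sum_comm]
        refine Finset.sum_congr rfl fun l _ => Finset.sum_congr rfl fun a _ => ?_
        ring
    _ = 0 := by simp only [sum_neg_one_pow_mul_det_submatrix_succAbove_column, mul_zero,
        Finset.sum_const_zero]

theorem det_of_snoc_eq_toLinearMap (g : Fin k → Fin (k + 1) → R) (u : Fin (k + 1) → R) :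
    (of (Fin.snoc g u : Fin (k + 1) → Fin (k + 1) → R)).det =
      (detRowAlternating : (Fin (k + 1) → R) [⋀^Fin (k + 1)]→ₗ[R] R).toMultilinearMap.toLinearMap
        (Fin.snoc g 0) (Fin.last k) u := by
  rw [MultilinearMap.toLinearMap_apply, AlternatingMap.coe_multilinearMap, Fin.update_snoc_last]
  rfl

end Matrix

/-- Plücker relations: for an `n × (m+1)` matrix `N` over a commutative ring,
row tuples `i = (i_1,…,i_m)` and `j = (j_1,…,j_{m+2})` (so the minors below are
`(m+1) × (m+1)`), one has
`∑_{a=1}^{m+2} (−1)^a ν_{i_1,…,i_m,j_a} ν_{j_1,…,ĵ_a,…,j_{m+2}} = 0`,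
where `ν` of a list of `m+1` rows is the determinant of the square matrix formed by those
rows of `N` in the listed order. -/
theorem plucker_relation (R : Type*) [CommRing R] (n m : ℕ)
    (N : Matrix (Fin n) (Fin (m + 1)) R)
    (i : Fin m → Fin n) (j : Fin (m + 2) → Fin n) :
    ∑ a : Fin (m + 2),
        (-1 : R) ^ (a.1 + 1) *
          Matrix.det (Matrix.of fun t b => N ((Fin.snoc i (j a) : Fin (m + 1) → Fin n) t) b) *
          Matrix.det (Matrix.of fun t b => N (j (a.succAbove t)) b) = 0 := by
  have hrows : ∀ a, (of fun t b => N ((Fin.snoc i (j a) : Fin (m + 1) → Fin n) t) b) =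
      of (Fin.snoc (N ∘ i) (N (j a))) := fun a => by
    ext t b
    exact congrFun (congrFun (Fin.comp_snoc N i (j a)) t) b
  simp_rw [hrows, det_of_snoc_eq_toLinearMap, pow_succ, mul_neg_one, neg_mul,
    Finset.sum_neg_distrib, neg_eq_zero]
  exact sum_neg_one_pow_mul_det_submatrix_succAbove_linearMap (N.submatrix j id) _
end

section
/- For every prime p and every integer r ≥ 1, every (r+1)×(r+1) minor of the matrix Γ̃ is invariant under the action of G: for every (r+1)-element subset J of {1, …, 2r+2} and every g ∈ G one has g·f̃_J = f̃_J in k[X,Y,Z][X^{−1}]. -/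
open MvPolynomial

noncomputable section

/-- The field `k = F_p({x_{ij}})`. -/
abbrev kk (p r : ℕ) : Type := FractionRing (MvPolynomial (Fin 2 × Fin r) (ZMod p))

/-- The polynomial ring `k[X,Y,Z]`; `X 0 = X`, `X 1 = Y`, `X 2 = Z`. -/
abbrev PR (p r : ℕ) : Type := MvPolynomial (Fin 3) (kk p r)

-- shortcut instances, to speed up typeclass resolution
instance (p r : ℕ) : CommRing (kk p r) := inferInstance
instance (p r : ℕ) : CommRing (PR p r) := inferInstance

/-- The generator `x_{ij}` as an element of `k`. -/
def xv (p r : ℕ) (i : Fin 2) (j : Fin r) : kk p r :=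
  algebraMap (MvPolynomial (Fin 2 × Fin r) (ZMod p)) (kk p r) (X (i, j))

/-- `∑_j g_j x_{ij}`, the coefficient describing the action of `g ∈ (ℤ/pℤ)^r`. -/
def cf (p r : ℕ) (i : Fin 2) (g : Fin r → ZMod p) : kk p r :=
  ∑ j : Fin r, (ZMod.cast (g j) : kk p r) * xv p r i j

/-- The action of `g ∈ G = (ℤ/pℤ)^r` on `k[X,Y,Z]`: the generator `e_j` acts by
`X ↦ X`, `Y ↦ Y + x_{1j} X`, `Z ↦ Z + 2 x_{1j} Y + (x_{1j}^2 + x_{2j}) X`, and a general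
`g = (g_1,…,g_r)` acts as `∏_j e_j^{g_j}`. -/
def act (p r : ℕ) (g : Fin r → ZMod p) : PR p r →ₐ[kk p r] PR p r :=
  aeval ![X 0, X 1 + C (cf p r 0 g) * X 0,
    X 2 + C (2 * cf p r 0 g) * X 1 + C (cf p r 0 g ^ 2 + cf p r 1 g) * X 0]

/-- The localization `S_X = k[X,Y,Z][X⁻¹]`. -/
abbrev SX (p r : ℕ) : Type := Localization.Away (X 0 : PR p r)

/-- The (unique) extension of the action of `g ∈ G` to `S_X` (each `g` fixes `X`). -/
def actX (p r : ℕ) (g : Fin r → ZMod p) : SX p r →+* SX p r :=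
  Localization.awayLift ((algebraMap (PR p r) (SX p r)).comp (act p r g).toRingHom) (X 0)
    (by
      have h : (act p r g) (X 0) = X 0 := by simp [act]
      simp only [RingHom.comp_apply, AlgHom.toRingHom_eq_coe, RingHom.coe_coe, h]
      exact IsLocalization.map_units (M := Submonoid.powers (X 0 : PR p r)) (SX p r)
        ⟨X 0, Submonoid.mem_powers _⟩)

/-- `Y/X ∈ S_X`. -/
def YX (p r : ℕ) : SX p r := Localization.mk (X 1) ⟨X 0, ⟨1, pow_one _⟩⟩

/-- `−Δ/X² ∈ S_X`, where `Δ = Y² − XZ`. -/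
def nDX2 (p r : ℕ) : SX p r :=
  Localization.mk (-(X 1 ^ 2 - X 0 * X 2)) ⟨X 0 ^ 2, ⟨2, rfl⟩⟩

/-- The `(2r+2) × (r+1)` matrix `Γ̃` over `S_X`: its (1-indexed) row `2l+1` is
`(x_{11}^{p^l}, …, x_{1r}^{p^l}, (Y/X)^{p^l})` and its row `2l+2` is
`(x_{21}^{p^l}, …, x_{2r}^{p^l}, (−Δ/X²)^{p^l})`, for `l = 0, …, r`. -/
def Gt (p r : ℕ) : Matrix (Fin (2 * r + 2)) (Fin (r + 1)) (SX p r) :=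
  Matrix.of fun i j =>
    (if hj : (j : ℕ) < r then
        algebraMap (PR p r) (SX p r) (C (xv p r ⟨i.1 % 2, by omega⟩ ⟨j, hj⟩))
      else if i.1 % 2 = 0 then YX p r else nDX2 p r) ^ p ^ (i.1 / 2)

/-- The minor `f̃_J` of `Γ̃` on an `(r+1)`-element set `J` of rows (rows taken in
increasing order); junk value `0` if `J` does not have exactly `r+1` elements. -/
def ftil (p r : ℕ) (J : Finset (Fin (2 * r + 2))) : SX p r :=
  if h : J.card = r + 1 then
    Matrix.det (Matrix.of fun a b => Gt p r ((J.orderIsoOfFin h a : Fin (2 * r + 2))) b)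
  else 0

set_option maxHeartbeats 1000000 in
set_option synthInstance.maxHeartbeats 400000 in
theorem dummy_opt : True := trivial

section Aux

set_option maxHeartbeats 1000000
set_option synthInstance.maxHeartbeats 400000

variable {p r : ℕ}

instance instCharP_SX (p r : ℕ) [Fact p.Prime] : CharP (SX p r) p :=
  charP_of_injective_ringHom
    (IsLocalization.injective (M := Submonoid.powers (X 0 : PR p r)) (SX p r)
      (powers_le_nonZeroDivisors_of_noZeroDivisors (MvPolynomial.X_ne_zero 0))) p

lemma hu (p r : ℕ) : IsUnit (algebraMap (PR p r) (SX p r) (X 0)) :=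
  IsLocalization.map_units (M := Submonoid.powers (X 0 : PR p r)) (SX p r)
    ⟨X 0, Submonoid.mem_powers _⟩

lemma actX_algebraMap (g : Fin r → ZMod p) (q : PR p r) :
    actX p r g (algebraMap (PR p r) (SX p r) q)
      = algebraMap (PR p r) (SX p r) (act p r g q) := by
  rw [actX]
  exact IsLocalization.Away.lift_eq _ _ q

lemma act_C (g : Fin r → ZMod p) (a : kk p r) : act p r g (C a) = C a := by
  simp [act, algebraMap_eq]

lemma act_X0 (g : Fin r → ZMod p) : act p r g (X 0) = X 0 := by simp [act]

lemma act_X1 (g : Fin r → ZMod p) :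
    act p r g (X 1) = X 1 + C (cf p r 0 g) * X 0 := by simp [act]

lemma act_X2 (g : Fin r → ZMod p) :
    act p r g (X 2) = X 2 + C (2 * cf p r 0 g) * X 1
      + C (cf p r 0 g ^ 2 + cf p r 1 g) * X 0 := by simp [act]

lemma YX_spec (p r : ℕ) :
    YX p r * algebraMap (PR p r) (SX p r) (X 0) = algebraMap (PR p r) (SX p r) (X 1) := by
  rw [YX, Localization.mk_eq_mk']
  exact IsLocalization.mk'_spec (M := Submonoid.powers (X 0 : PR p r)) (SX p r) (X 1)
    ⟨X 0, ⟨1, pow_one _⟩⟩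

lemma nDX2_spec (p r : ℕ) :
    nDX2 p r * algebraMap (PR p r) (SX p r) (X 0 ^ 2)
      = algebraMap (PR p r) (SX p r) (-(X 1 ^ 2 - X 0 * X 2)) := by
  rw [nDX2, Localization.mk_eq_mk']
  exact IsLocalization.mk'_spec (M := Submonoid.powers (X 0 : PR p r)) (SX p r) _
    ⟨X 0 ^ 2, ⟨2, rfl⟩⟩

lemma actX_YX (g : Fin r → ZMod p) :
    actX p r g (YX p r) = YX p r + algebraMap (PR p r) (SX p r) (C (cf p r 0 g)) := by
  have h := congrArg (actX p r g) (YX_spec p r)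
  rw [map_mul, actX_algebraMap, actX_algebraMap, act_X0, act_X1, map_add, map_mul,
    ← YX_spec p r] at h
  refine (hu p r).mul_right_cancel (h.trans ?_)
  ring

lemma actX_nDX2 (g : Fin r → ZMod p) :
    actX p r g (nDX2 p r) = nDX2 p r + algebraMap (PR p r) (SX p r) (C (cf p r 1 g)) := by
  have hact : act p r g (-(X 1 ^ 2 - X 0 * X 2))
      = -(X 1 ^ 2 - X 0 * X 2) + C (cf p r 1 g) * X 0 ^ 2 := by
    simp only [map_neg, map_sub, map_pow, map_mul, act_X0, act_X1, act_X2, C_add, C_mul,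
      C_pow, map_ofNat]
    ring
  have h := congrArg (actX p r g) (nDX2_spec p r)
  rw [map_mul, actX_algebraMap, actX_algebraMap, hact, map_pow, act_X0, map_add, map_mul,
    ← nDX2_spec p r, map_pow] at h
  refine ((hu p r).pow 2).mul_right_cancel (h.trans ?_)
  ring

lemma cf_pow [Fact p.Prime] (i : Fin 2) (g : Fin r → ZMod p) (l : ℕ) :
    (cf p r i g) ^ p ^ l = ∑ j, (ZMod.cast (g j) : kk p r) * (xv p r i j) ^ p ^ l := by
  rw [cf, sum_pow_char_pow]
  refine Finset.sum_congr rfl fun j _ => ?_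
  rw [mul_pow]
  congr 1
  rw [show (ZMod.cast (g j) : kk p r) = ZMod.castHom (dvd_refl p) (kk p r) (g j) from rfl,
    ← map_pow, ZMod.pow_card_pow]

/-- The elementary column-operation matrix. -/
def Em (p r : ℕ) (g : Fin r → ZMod p) : Matrix (Fin (r + 1)) (Fin (r + 1)) (SX p r) :=
  Matrix.of fun a b =>
    if a = b then 1
    else if ha : (a : ℕ) < r then
      (if (b : ℕ) < r then 0
       else algebraMap (PR p r) (SX p r) (C (ZMod.cast (g ⟨a, ha⟩) : kk p r)))
    else 0

lemma Em_apply (g : Fin r → ZMod p) (a b : Fin (r + 1)) :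
    Em p r g a b
      = if a = b then 1
        else if ha : (a : ℕ) < r then
          (if (b : ℕ) < r then 0
           else algebraMap (PR p r) (SX p r) (C (ZMod.cast (g ⟨a, ha⟩) : kk p r)))
        else 0 := rfl

lemma Gt_apply (i : Fin (2 * r + 2)) (j : Fin (r + 1)) :
    Gt p r i j
      = (if hj : (j : ℕ) < r then
          algebraMap (PR p r) (SX p r) (C (xv p r ⟨i.1 % 2, by omega⟩ ⟨j, hj⟩))
        else if i.1 % 2 = 0 then YX p r else nDX2 p r) ^ p ^ (i.1 / 2) := rfl

lemma det_Em (p r : ℕ) (g : Fin r → ZMod p) : (Em p r g).det = 1 := by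
  have ht : (Em p r g).BlockTriangular id := by
    intro a b hlt
    have hab : a ≠ b := ne_of_gt hlt
    have hba : (b : ℕ) < (a : ℕ) := hlt
    rw [Em_apply, if_neg hab]
    split
    · rw [if_pos (by omega)]
    · rfl
  rw [Matrix.det_of_upperTriangular ht]
  exact Finset.prod_eq_one fun a _ => if_pos rfl

lemma actX_Gt [Fact p.Prime] (g : Fin r → ZMod p) (i : Fin (2 * r + 2)) (b : Fin (r + 1)) :
    actX p r g (Gt p r i b) = ∑ c, Gt p r i c * Em p r g c b := by
  by_cases hb : (b : ℕ) < r
  · have hE : ∀ c, Em p r g c b = if c = b then 1 else 0 := by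
      intro c
      by_cases hc : c = b
      · rw [Em_apply, if_pos hc, if_pos hc]
      · simp [Em_apply, hc, hb]
    simp only [hE, mul_ite, mul_one, mul_zero, Finset.sum_ite_eq', Finset.mem_univ, if_pos]
    rw [Gt_apply, dif_pos hb, map_pow, actX_algebraMap, act_C]
  · have hb' : b = Fin.last r := Fin.ext (by have := b.isLt; simp only [Fin.val_last]; omega)
    subst hb'
    rw [Fin.sum_univ_castSucc]
    have hEl : Em p r g (Fin.last r) (Fin.last r) = 1 := if_pos rfl
    have h2 : ∀ j : Fin r, ((j.castSucc : Fin (r + 1)) : ℕ) < r := fun j => by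
      simpa using j.isLt
    have hEc : ∀ j : Fin r, Em p r g j.castSucc (Fin.last r)
        = algebraMap (PR p r) (SX p r) (C (ZMod.cast (g j) : kk p r)) := by
      intro j
      have h1 : (j.castSucc : Fin (r + 1)) ≠ Fin.last r := (Fin.castSucc_lt_last j).ne
      rw [Em_apply, if_neg h1, dif_pos (h2 j), if_neg hb]
      have hj : (⟨((j.castSucc : Fin (r + 1)) : ℕ), h2 j⟩ : Fin r) = j :=
        Fin.ext (Fin.coe_castSucc j)
      rw [hj]
    have hGc : ∀ j : Fin r, Gt p r i j.castSucc
        = algebraMap (PR p r) (SX p r)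
            (C (xv p r ⟨i.1 % 2, by omega⟩ j)) ^ p ^ (i.1 / 2) := by
      intro j
      rw [Gt_apply, dif_pos (h2 j)]
      have hj : (⟨((j.castSucc : Fin (r + 1)) : ℕ), h2 j⟩ : Fin r) = j :=
        Fin.ext (Fin.coe_castSucc j)
      rw [hj]
    have hGl : Gt p r i (Fin.last r)
        = (if i.1 % 2 = 0 then YX p r else nDX2 p r) ^ p ^ (i.1 / 2) := by
      rw [Gt_apply, dif_neg hb]
    rw [hGl, hEl, mul_one]
    have hw : actX p r g (if i.1 % 2 = 0 then YX p r else nDX2 p r)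
        = (if i.1 % 2 = 0 then YX p r else nDX2 p r)
          + algebraMap (PR p r) (SX p r) (C (cf p r ⟨i.1 % 2, by omega⟩ g)) := by
      rcases Nat.mod_two_eq_zero_or_one i.1 with h | h
      · rw [if_pos h]
        rw [show (⟨i.1 % 2, by omega⟩ : Fin 2) = 0 from Fin.ext h]
        exact actX_YX g
      · rw [if_neg (show ¬ (i.1 % 2 = 0) by omega)]
        rw [show (⟨i.1 % 2, by omega⟩ : Fin 2) = 1 from Fin.ext h]
        exact actX_nDX2 g
    rw [map_pow, hw, add_pow_char_pow, ← map_pow, ← C_pow,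
      cf_pow (⟨i.1 % 2, by omega⟩ : Fin 2) g (i.1 / 2)]
    rw [add_comm]
    congr 1
    rw [show (C (∑ j, (ZMod.cast (g j) : kk p r)
          * xv p r (⟨i.1 % 2, by omega⟩ : Fin 2) j ^ p ^ (i.1 / 2)) : PR p r)
        = ∑ j : Fin r, C (ZMod.cast (g j) : kk p r)
            * C (xv p r (⟨i.1 % 2, by omega⟩ : Fin 2) j) ^ p ^ (i.1 / 2) from by
      rw [map_sum]; exact Finset.sum_congr rfl fun j _ => by rw [C_mul, C_pow]]
    rw [map_sum]
    refine Finset.sum_congr rfl fun j _ => ?_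
    rw [hGc j, hEc j, map_mul, map_pow]
    ring

end Aux

/-- every `(r+1) × (r+1)` minor of `Γ̃` is `G`-invariant. -/
theorem minors_invariant (p r : ℕ) [Fact p.Prime] (hr : 1 ≤ r) :
    ∀ (J : Finset (Fin (2 * r + 2))), J.card = r + 1 →
      ∀ g : Fin r → ZMod p, actX p r g (ftil p r J) = ftil p r J := by
  intro J hJ g
  rw [ftil, dif_pos hJ, RingHom.map_det, RingHom.mapMatrix_apply]
  have hmap : (Matrix.of fun a b => Gt p r ((J.orderIsoOfFin hJ a : Fin (2 * r + 2))) b).map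
        (actX p r g)
      = (Matrix.of fun a b => Gt p r ((J.orderIsoOfFin hJ a : Fin (2 * r + 2))) b)
        * Em p r g := by
    ext a b
    rw [Matrix.map_apply, Matrix.mul_apply]
    exact actX_Gt g _ b
  rw [hmap, Matrix.det_mul, det_Em, mul_one]

end
end
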